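/- arXiv:1805.08107 — 6 statements merged into one kernel-verified Lean document; each statement's English description precedes it below -/
import Mathlib

section
/- Let n ≥ 1 and 1 ≤ k ≤ n. Let H be a symmetric positive semidefinite n×n real matrix, G a symmetric positive definite n×n real matrix, and c > 0 a real number such that G ⪯ c⁻¹·I in the Loewner order (equivalently G⁻¹ ⪰ c·I). Let G^{-1/2} denote the inverse of the positive definite square root of G. Then σ_k(λ(G^{-1/2}·H·G^{-1/2})) ≥ c^k·σ_k(λ(H)), where λ(A) denotes the n-tuple of eigenvalues (with multiplicity) of a symmetric matrix A. -/
open Finset Matrix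

/-- The `k`-th elementary symmetric polynomial of `l : Fin n → ℝ`. -/
noncomputable def esymm (n k : ℕ) (l : Fin n → ℝ) : ℝ :=
  ∑ s ∈ Finset.powersetCard k (Finset.univ : Finset (Fin n)), ∏ i ∈ s, l i

section

open scoped ComplexOrder

/-- The square root of a positive semidefinite matrix, as defined in Mathlib (Dec 2024);
removed from Mathlib since, restored here with its old definition. -/
noncomputable def Matrix.PosSemidef.sqrt {n 𝕜 : Type*} [Fintype n] [DecidableEq n] [RCLike 𝕜]
    {A : Matrix n n 𝕜} (hA : A.PosSemidef) : Matrix n n 𝕜 :=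
  (hA.isHermitian.eigenvectorUnitary : Matrix n n 𝕜) *
    diagonal ((↑) ∘ (√·) ∘ hA.isHermitian.eigenvalues) *
    (star hA.isHermitian.eigenvectorUnitary : Matrix n n 𝕜)

end

/-!
Write `H = R²` and `G = S²` with `R`, `S` symmetric. The matrix `S⁻¹ H S⁻¹ = (S⁻¹ R)(R S⁻¹)`
has the same characteristic polynomial, hence the same eigenvalues, as `R G⁻¹ R`, and
`G⁻¹ ⪰ c I` gives `R G⁻¹ R ⪰ c R² = c H`. Now `σ_k` of the eigenvalues of a symmetric matrix is
the sum of its `k × k` principal minors; these are monotone in the Loewner order on positive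
semidefinite matrices (`0 ⪯ B ⪯ A ⟹ det B ≤ det A`) and get multiplied by `c ^ k` when the
matrix is scaled by `c`.
-/

open scoped ComplexOrder

namespace Matrix

variable {m : Type*} [Fintype m]

lemma PosSemidef.mul_mul_self_of_isHermitian {𝕜 : Type*} [RCLike 𝕜] {A S : Matrix m m 𝕜}
    (hA : A.PosSemidef) (hS : S.IsHermitian) : (S * A * S).PosSemidef := by
  simpa [hS.eq] using hA.mul_mul_conjTranspose_same S

variable [DecidableEq m]

namespace PosSemidef

variable {𝕜 : Type*} [RCLike 𝕜] {A : Matrix m m 𝕜}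

lemma posSemidef_sqrt (hA : A.PosSemidef) : hA.sqrt.PosSemidef :=
  (PosSemidef.diagonal fun i => by simp).mul_mul_conjTranspose_same _

lemma sqrt_mul_self (hA : A.PosSemidef) : hA.sqrt * hA.sqrt = A := by
  have hD : diagonal ((↑) ∘ (√·) ∘ hA.isHermitian.eigenvalues) *
      diagonal ((↑) ∘ (√·) ∘ hA.isHermitian.eigenvalues) =
      diagonal (RCLike.ofReal ∘ hA.isHermitian.eigenvalues : m → 𝕜) := by
    rw [diagonal_mul_diagonal]
    congr 1 with i
    simp [← RCLike.ofReal_mul, Real.mul_self_sqrt (hA.eigenvalues_nonneg i)]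
  conv_rhs => rw [hA.isHermitian.spectral_theorem, Unitary.conjStarAlgAut_apply, ← hD]
  simp only [sqrt, Matrix.mul_assoc]
  rw [← Matrix.mul_assoc (star _) _ (_ * _), Unitary.coe_star_mul_self, Matrix.one_mul]

end PosSemidef

lemma inv_mul_mul_inv_eq_one {R : Type*} [CommRing R] {S B : Matrix m m R} (hSB : S * S = B)
    (hS : IsUnit S.det) : S⁻¹ * B * S⁻¹ = 1 := by
  rw [← hSB, Matrix.mul_assoc, mul_nonsing_inv_cancel_right _ _ hS, nonsing_inv_mul _ hS]

lemma IsHermitian.one_le_eigenvalues {𝕜 : Type*} [RCLike 𝕜] {C : Matrix m m 𝕜}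
    (hC : C.IsHermitian) (h : (C - 1).PosSemidef) (i : m) : 1 ≤ hC.eigenvalues i := by
  set v := ⇑(hC.eigenvectorBasis i)
  have hv : star v ⬝ᵥ v = 1 := by
    rw [dotProduct_comm, ← EuclideanSpace.inner_eq_star_dotProduct, inner_self_eq_norm_sq_to_K,
      hC.eigenvectorBasis.orthonormal.1 i]
    simp
  have hq := h.re_dotProduct_nonneg v
  rw [sub_mulVec, one_mulVec, dotProduct_sub, hv, map_sub, RCLike.one_re] at hq
  rw [hC.eigenvalues_eq i]
  linarith

lemma one_le_det_of_posSemidef_sub_one {C : Matrix m m ℝ} (h : (C - 1).PosSemidef) :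
    1 ≤ C.det := by
  have hC : C.IsHermitian := by simpa using h.isHermitian.add isHermitian_one
  rw [hC.det_eq_prod_eigenvalues]
  exact Finset.one_le_prod fun i _ => by simpa using hC.one_le_eigenvalues h i

lemma det_le_det_of_posSemidef_sub {A B : Matrix m m ℝ} (hB : B.PosSemidef)
    (hAB : (A - B).PosSemidef) : B.det ≤ A.det := by
  rcases hB.det_nonneg.eq_or_lt with hB0 | hBpos
  · rw [← hB0]
    simpa using (hAB.add hB).det_nonneg
  set R := hB.sqrt
  have hRR : R * R = B := hB.sqrt_mul_self
  have hRdet : IsUnit R.det := by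
    refine isUnit_iff_ne_zero.mpr fun h => hBpos.ne' ?_
    rw [← hRR, det_mul, h, zero_mul]
  set C := R⁻¹ * A * R⁻¹
  have hC : (C - 1).PosSemidef := by
    rw [← inv_mul_mul_inv_eq_one hRR hRdet, ← Matrix.sub_mul, ← Matrix.mul_sub]
    exact hAB.mul_mul_self_of_isHermitian hB.posSemidef_sqrt.isHermitian.inv
  have hA : R * C * R = A := by
    simp only [C, Matrix.mul_assoc, mul_nonsing_inv_cancel_left _ _ hRdet,
      nonsing_inv_mul_cancel_right _ _ hRdet]
  clear_value C
  calc B.det = B.det * 1 := (mul_one _).symm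
    _ ≤ B.det * C.det := mul_le_mul_of_nonneg_left (one_le_det_of_posSemidef_sub_one hC) hBpos.le
    _ = (R * C * R).det := by rw [← hRR, det_mul, det_mul, det_mul]; ring
    _ = A.det := by rw [hA]

lemma PosDef.posSemidef_inv_sub_smul_one {G : Matrix m m ℝ} (hG : G.PosDef) {c : ℝ} (hc : 0 < c)
    (hGc : (c⁻¹ • (1 : Matrix m m ℝ) - G).PosSemidef) :
    (G⁻¹ - c • (1 : Matrix m m ℝ)).PosSemidef := by
  set S := hG.posSemidef.sqrt
  have hSS : S * S = G := hG.posSemidef.sqrt_mul_self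
  have hSdet : IsUnit S.det := by
    rw [← isUnit_mul_self_iff, ← det_mul, hSS]
    exact hG.isUnit.map detMonoidHom
  have hGinv : G⁻¹ = S⁻¹ * 1 * S⁻¹ := by rw [← hSS, Matrix.mul_inv_rev, Matrix.mul_one]
  have hconj : c • (S⁻¹ * (c⁻¹ • 1 - G) * S⁻¹) = G⁻¹ - c • 1 := by
    rw [Matrix.mul_sub, Matrix.sub_mul, inv_mul_mul_inv_eq_one hSS hSdet, Matrix.mul_smul,
      Matrix.smul_mul, smul_sub, smul_smul, mul_inv_cancel₀ hc.ne', one_smul, hGinv]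
  rw [← hconj]
  exact (hGc.mul_mul_self_of_isHermitian hG.posSemidef.posSemidef_sqrt.isHermitian.inv).smul hc.le

def principalMinorSum {R : Type*} [CommRing R] (k : ℕ) (A : Matrix m m R) : R :=
  ∑ s ∈ Finset.univ.powersetCard k, (A.submatrix (Subtype.val : s → m) Subtype.val).det

lemma principalMinorSum_smul {R : Type*} [CommRing R] (k : ℕ) (c : R) (A : Matrix m m R) :
    principalMinorSum k (c • A) = c ^ k * principalMinorSum k A := by
  rw [principalMinorSum, principalMinorSum, Finset.mul_sum]
  refine Finset.sum_congr rfl fun s hs => ?_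
  rw [show (c • A).submatrix (Subtype.val : s → m) Subtype.val =
      c • A.submatrix Subtype.val Subtype.val from rfl, det_smul, Fintype.card_coe,
    (Finset.mem_powersetCard.mp hs).2]

lemma principalMinorSum_le_of_posSemidef_sub {k : ℕ} {A B : Matrix m m ℝ} (hB : B.PosSemidef)
    (hAB : (A - B).PosSemidef) : principalMinorSum k B ≤ principalMinorSum k A :=
  Finset.sum_le_sum fun _ _ =>
    det_le_det_of_posSemidef_sub (hB.submatrix _) (hAB.submatrix Subtype.val)

lemma IsHermitian.esymm_eigenvalues_eq_principalMinorSum {n k : ℕ} (hkn : k ≤ n)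
    {A : Matrix (Fin n) (Fin n) ℝ} (hA : A.IsHermitian) :
    esymm n k hA.eigenvalues = A.principalMinorSum k := by
  have hcoeff := A.charpoly_coeff_eq_sum_minors k (by simpa using hkn)
  have hmap : (Finset.univ.val.map fun i => Polynomial.X - Polynomial.C (hA.eigenvalues i)) =
      (Finset.univ.val.map hA.eigenvalues).map (fun t => Polynomial.X - Polynomial.C t) := by
    rw [Multiset.map_map]; rfl
  simp only [hA.charpoly_eq, RCLike.ofReal_real_eq_id, id_eq, Finset.prod, hmap] at hcoeff
  rw [Multiset.prod_X_sub_C_coeff _ (by simp)] at hcoeff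
  simp only [Multiset.card_map, Finset.card_val, Finset.card_univ, Fintype.card_fin,
    Nat.sub_sub_self hkn, Finset.esymm_map_val] at hcoeff
  exact mul_left_cancel₀ (pow_ne_zero k (neg_ne_zero.mpr one_ne_zero)) hcoeff

end Matrix

theorem stmt_4_general (n : ℕ) (k : ℕ) (hkn : k ≤ n)
    (H G : Matrix (Fin n) (Fin n) ℝ) (hH : H.PosSemidef) (hG : G.PosDef)
    (c : ℝ) (hc : 0 < c)
    (hGc : (c⁻¹ • (1 : Matrix (Fin n) (Fin n) ℝ) - G).PosSemidef)
    (M : Matrix (Fin n) (Fin n) ℝ)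
    (hM : M = hG.posSemidef.sqrt⁻¹ * H * hG.posSemidef.sqrt⁻¹)
    (hMh : M.IsHermitian) :
    c ^ k * esymm n k hH.isHermitian.eigenvalues ≤ esymm n k hMh.eigenvalues := by
  obtain ⟨S, hSS, hM⟩ : ∃ S, S * S = G ∧ M = S⁻¹ * H * S⁻¹ :=
    ⟨_, hG.posSemidef.sqrt_mul_self, hM⟩
  obtain ⟨R, hR, hRR⟩ : ∃ R, R.IsHermitian ∧ R * R = H :=
    ⟨hH.sqrt, hH.posSemidef_sqrt.isHermitian, hH.sqrt_mul_self⟩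
  have hN : (R * G⁻¹ * R).PosSemidef := hG.inv.posSemidef.mul_mul_self_of_isHermitian hR
  have hcharpoly : (R * G⁻¹ * R).charpoly = M.charpoly := by
    calc (R * G⁻¹ * R).charpoly = ((R * S⁻¹) * (S⁻¹ * R)).charpoly := by
          rw [← hSS, Matrix.mul_inv_rev]; simp only [Matrix.mul_assoc]
      _ = ((S⁻¹ * R) * (R * S⁻¹)).charpoly := charpoly_mul_comm _ _
      _ = M.charpoly := by rw [hM, ← hRR]; simp only [Matrix.mul_assoc]
  have hle : (R * G⁻¹ * R - c • H).PosSemidef := by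
    have hfactor : R * G⁻¹ * R - c • H = R * (G⁻¹ - c • 1) * R := by
      rw [← hRR, Matrix.mul_sub, Matrix.sub_mul, Matrix.mul_smul, Matrix.smul_mul, Matrix.mul_one]
    rw [hfactor]
    exact (hG.posSemidef_inv_sub_smul_one hc hGc).mul_mul_self_of_isHermitian hR
  calc c ^ k * esymm n k hH.isHermitian.eigenvalues = (c • H).principalMinorSum k := by
        rw [hH.isHermitian.esymm_eigenvalues_eq_principalMinorSum hkn, principalMinorSum_smul]
    _ ≤ (R * G⁻¹ * R).principalMinorSum k :=
        principalMinorSum_le_of_posSemidef_sub (hH.smul hc.le) hle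
    _ = esymm n k hMh.eigenvalues := by
        rw [← hN.isHermitian.esymm_eigenvalues_eq_principalMinorSum hkn,
          (hN.isHermitian.eigenvalues_eq_eigenvalues_iff hMh).2 hcharpoly]

/-- If `H ⪰ 0`, `G > 0` with `G ⪯ c⁻¹ I`, then
`σ_k(λ(G^{-1/2} H G^{-1/2})) ≥ c^k σ_k(λ(H))`. -/
theorem stmt_4 (n : ℕ) (hn : 1 ≤ n) (k : ℕ) (hk1 : 1 ≤ k) (hkn : k ≤ n)
    (H G : Matrix (Fin n) (Fin n) ℝ) (hH : H.PosSemidef) (hG : G.PosDef)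
    (c : ℝ) (hc : 0 < c)
    (hGc : (c⁻¹ • (1 : Matrix (Fin n) (Fin n) ℝ) - G).PosSemidef)
    (M : Matrix (Fin n) (Fin n) ℝ)
    (hM : M = hG.posSemidef.sqrt⁻¹ * H * hG.posSemidef.sqrt⁻¹)
    (hMh : M.IsHermitian) :
    c ^ k * esymm n k hH.isHermitian.eigenvalues ≤ esymm n k hMh.eigenvalues :=
  stmt_4_general n k hkn H G hH hG c hc hGc M hM hMh
end

section
/- Let 0 ≤ l < π/2 and let u : [0, l] → ℝ be twice differentiable with u''(s) + u(s) > 0 for all s ∈ [0, l] and u'(0) = 0. Then the function s ↦ u(s)/cos(s) is nondecreasing on [0, l]; in particular u(0) ≤ u(l)/cos(l). -/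
/-!
The Wronskian `W = u' cos + u sin` of `cos` and `u` satisfies `W' = (u'' + u) cos > 0` and
`W(0) = u'(0) = 0`, so `W ≥ 0`; since `(u / cos)' = W / cos²`, the quotient `u / cos` is
nondecreasing.
-/

open Real Set

lemma cos_pos_of_mem_Icc {a b s : ℝ} (ha : -(π / 2) < a) (hb : b < π / 2) (hs : s ∈ Icc a b) :
    0 < cos s :=
  cos_pos_of_mem_Ioo ⟨ha.trans_le hs.1, hs.2.trans_lt hb⟩

lemma monotoneOn_Icc_of_hasDerivAt_nonneg {f f' : ℝ → ℝ} {a b : ℝ}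
    (hf : ∀ x ∈ Icc a b, HasDerivAt f (f' x) x) (hf' : ∀ x ∈ Ioo a b, 0 ≤ f' x) :
    MonotoneOn f (Icc a b) := by
  refine monotoneOn_of_hasDerivWithinAt_nonneg (f' := f') (convex_Icc a b)
    (fun x hx => (hf x hx).continuousAt.continuousWithinAt) (fun x hx => ?_) ?_
  · rw [interior_Icc] at hx ⊢
    exact (hf x (Ioo_subset_Icc_self hx)).hasDerivWithinAt
  · rwa [interior_Icc]

lemma hasDerivAt_wronskian_cos {u u' u'' : ℝ → ℝ} {s : ℝ}
    (hu : HasDerivAt u (u' s) s) (hu' : HasDerivAt u' (u'' s) s) :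
    HasDerivAt (fun t => u' t * cos t + u t * sin t) ((u'' s + u s) * cos s) s :=
  ((hu'.mul (hasDerivAt_cos s)).add (hu.mul (hasDerivAt_sin s))).congr_deriv (by ring)

lemma hasDerivAt_div_cos {u u' : ℝ → ℝ} {s : ℝ} (hu : HasDerivAt u (u' s) s) (hs : cos s ≠ 0) :
    HasDerivAt (fun t => u t / cos t) ((u' s * cos s + u s * sin s) / cos s ^ 2) s :=
  (hu.div (hasDerivAt_cos s) hs).congr_deriv (by ring)

/-- If `0 ≤ l < π/2`, `u'' + u > 0` on `[0, l]` and `u'(0) = 0`,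
then `s ↦ u(s)/cos s` is nondecreasing on `[0, l]`; in particular
`u(0) ≤ u(l)/cos l`. -/
theorem stmt_6 (l : ℝ) (hl0 : 0 ≤ l) (hl : l < Real.pi / 2)
    (u u' u'' : ℝ → ℝ)
    (hu : ∀ s ∈ Set.Icc 0 l, HasDerivAt u (u' s) s)
    (hu' : ∀ s ∈ Set.Icc 0 l, HasDerivAt u' (u'' s) s)
    (hpos : ∀ s ∈ Set.Icc 0 l, 0 < u'' s + u s)
    (h0 : u' 0 = 0) :
    MonotoneOn (fun s => u s / Real.cos s) (Set.Icc 0 l)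
      ∧ u 0 ≤ u l / Real.cos l := by
  have hcos : ∀ s ∈ Icc 0 l, 0 < cos s :=
    fun s => cos_pos_of_mem_Icc (by linarith [pi_pos]) hl
  have hW : MonotoneOn (fun t => u' t * cos t + u t * sin t) (Icc 0 l) :=
    monotoneOn_Icc_of_hasDerivAt_nonneg (fun s hs => hasDerivAt_wronskian_cos (hu s hs) (hu' s hs))
      fun s hs => (mul_pos (hpos s (Ioo_subset_Icc_self hs)) (hcos s (Ioo_subset_Icc_self hs))).le
  have hW_nonneg : ∀ s ∈ Icc 0 l, 0 ≤ u' s * cos s + u s * sin s := fun s hs => by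
    simpa [h0] using hW (left_mem_Icc.2 hl0) hs hs.1
  have hmono : MonotoneOn (fun s => u s / cos s) (Icc 0 l) :=
    monotoneOn_Icc_of_hasDerivAt_nonneg (fun s hs => hasDerivAt_div_cos (hu s hs) (hcos s hs).ne')
      fun s hs => div_nonneg (hW_nonneg s (Ioo_subset_Icc_self hs)) (sq_nonneg _)
  exact ⟨hmono, by simpa using hmono (left_mem_Icc.2 hl0) (right_mem_Icc.2 hl0) hl0⟩
end

section
/- Let n ≥ 2 and 2 ≤ k ≤ n. For λ' = (λ₁,…,λ_{n−1}) ∈ ℝ^{n−1} the following are equivalent: (i) σ_j(λ') > 0 for all j = 1,…,k−1; (ii) there exists λ_n ∈ ℝ such that σ_j(λ₁,…,λ_{n−1},λ_n) > 0 for all j = 1,…,k. In other words, the projection of the Gårding cone Γ_k ⊂ ℝⁿ onto ℝ^{n−1} (forgetting the last coordinate) is exactly the cone Γ'_{k−1} = {λ' ∈ ℝ^{n−1} : σ_j(λ') > 0, j = 1,…,k−1}. -/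
open Filter Polynomial

namespace Polynomial

theorem Splits.iterate_derivative {p : ℝ[X]} (hp : p.Splits) (s : ℕ) :
    (derivative^[s] p).Splits := by
  induction s with
  | zero => simpa
  | succ s ih =>
    rw [Function.iterate_succ_apply']
    rw [splits_iff_card_roots] at ih ⊢
    have := card_roots_le_derivative (derivative^[s] p)
    have := natDegree_derivative_le (derivative^[s] p)
    have := card_roots' (derivative (derivative^[s] p))
    omega

/-- The property is multiplicative, so it suffices to check it on constants and `X + C a`. -/
theorem Splits.two_mul_coeff_zero_mul_coeff_two_le {R : Type*} [CommRing R] [LinearOrder R]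
    [IsStrictOrderedRing R] {p : R[X]} (hp : p.Splits) :
    2 * p.coeff 0 * p.coeff 2 ≤ p.coeff 1 ^ 2 := by
  induction hp using Submonoid.closure_induction with
  | mem f hf => rcases hf with ⟨a, rfl⟩ | ⟨a, rfl⟩ <;> simp [coeff_C, coeff_X]
  | one => simp [coeff_one]
  | mul f g _ _ hf hg =>
    simp only [coeff_mul, Finset.Nat.sum_antidiagonal_eq_sum_range_succ_mk, Finset.sum_range_succ,
      Finset.sum_range_zero, zero_add]
    nlinarith [mul_le_mul_of_nonneg_left hg (sq_nonneg (f.coeff 0)),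
      mul_le_mul_of_nonneg_left hf (sq_nonneg (g.coeff 0))]

end Polynomial

theorem Multiset.esymm_cons {R : Type*} [CommSemiring R] (a : R) (s : Multiset R) (k : ℕ) :
    (a ::ₘ s).esymm (k + 1) = s.esymm (k + 1) + a * s.esymm k := by
  simp [Multiset.esymm, Multiset.powersetCard_cons, Multiset.sum_map_mul_left]

theorem esymm_zero (n : ℕ) (l : Fin n → ℝ) : esymm n 0 l = 1 := by
  simp [esymm]

theorem esymm_eq_zero_of_lt {n k : ℕ} (h : n < k) (l : Fin n → ℝ) : esymm n k l = 0 := by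
  rw [esymm, Finset.powersetCard_eq_empty.2 (by simpa using h), Finset.sum_empty]

theorem esymm_snoc (m k : ℕ) (l : Fin m → ℝ) (x : ℝ) :
    esymm (m + 1) (k + 1) (Fin.snoc l x) = esymm m (k + 1) l + x * esymm m k l := by
  have hval : Finset.univ.val.map (Fin.snoc l x : Fin (m + 1) → ℝ) =
      x ::ₘ Finset.univ.val.map l := by
    simp only [Fin.univ_val_map, List.ofFn_succ', Fin.snoc_last, Fin.snoc_castSucc,
      List.concat_eq_append, Multiset.cons_coe]
    exact Multiset.coe_eq_coe.2 (List.perm_append_singleton _ _)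
  simp only [esymm, ← Finset.esymm_map_val, hval, Multiset.esymm_cons]

theorem coeff_iterate_derivative_prod_X_add_C {n i s : ℕ} (h : i + s ≤ n) (l : Fin n → ℝ) :
    (derivative^[s] (∏ j, (X + C (l j)))).coeff i =
      (i + s).descFactorial s * esymm n (n - (i + s)) l := by
  rw [coeff_iterate_derivative, nsmul_eq_mul, Finset.prod_X_add_C_coeff _ l (by simpa using h),
    esymm, Finset.card_univ, Fintype.card_fin]

/-- Newton's inequality, without its binomial normalisation. -/
theorem esymm_mul_esymm_le_sq (m j : ℕ) (l : Fin m → ℝ) :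
    esymm m j l * esymm m (j + 2) l ≤ esymm m (j + 1) l ^ 2 := by
  rcases lt_or_ge m (j + 2) with h | h
  · rw [esymm_eq_zero_of_lt h, mul_zero]
    positivity
  obtain ⟨s, rfl⟩ : ∃ s, m = j + 2 + s := ⟨m - (j + 2), by omega⟩
  have hsplits : (derivative^[s] (∏ i, (X + C (l i)))).Splits :=
    (Splits.prod fun i _ => Splits.X_add_C (l i)).iterate_derivative s
  have key := hsplits.two_mul_coeff_zero_mul_coeff_two_le
  rw [coeff_iterate_derivative_prod_X_add_C (by omega), coeff_iterate_derivative_prod_X_add_C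
    (by omega), coeff_iterate_derivative_prod_X_add_C (by omega)] at key
  simp only [zero_add, Nat.add_sub_cancel, show j + 2 + s - (1 + s) = j + 1 by omega,
    show j + 2 + s - (2 + s) = j by omega] at key
  have hA : (0 : ℝ) < s.descFactorial s := by
    simp [Nat.descFactorial_self, Nat.factorial_pos]
  have hB : ((1 + s).descFactorial s : ℝ) = (1 + s) * s.descFactorial s := by
    have := Nat.succ_descFactorial s s
    rw [Nat.add_sub_cancel_left, one_mul, add_comm] at this
    exact_mod_cast this
  have hC : 2 * ((2 + s).descFactorial s : ℝ) = (2 + s) * ((1 + s) * s.descFactorial s) := by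
    have := Nat.succ_descFactorial (s + 1) s
    rw [show s + 1 + 1 - s = 2 by omega, show s + 1 + 1 = 2 + s by omega, add_comm s 1] at this
    rw [← hB]
    exact_mod_cast this
  rw [hB, mul_pow] at key
  have hscaled : ((s.descFactorial s : ℝ) ^ 2 * (1 + s)) * ((2 + s) *
      (esymm (j + 2 + s) j l * esymm (j + 2 + s) (j + 2) l)) ≤
      ((s.descFactorial s : ℝ) ^ 2 * (1 + s)) * ((1 + s) * esymm (j + 2 + s) (j + 1) l ^ 2) := by
    linear_combination key - (s.descFactorial s * esymm (j + 2 + s) (j + 2) l *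
      esymm (j + 2 + s) j l) * hC
  have := le_of_mul_le_mul_left hscaled (by positivity)
  nlinarith [sq_nonneg (esymm (j + 2 + s) (j + 1) l)]

theorem forall_le_esymm_pos_iff {n k : ℕ} {l : Fin n → ℝ} :
    (∀ j, 1 ≤ j → j ≤ k → 0 < esymm n j l) ↔ ∀ j ≤ k, 0 < esymm n j l := by
  refine ⟨fun h j hj => ?_, fun h j _ hj => h j hj⟩
  rcases j with _ | j
  · simp [esymm_zero]
  · exact h _ (by omega) hj

theorem exists_esymm_snoc_pos {m k : ℕ} {l : Fin m → ℝ} (h : ∀ j ≤ k, 0 < esymm m j l) :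
    ∃ x, ∀ j ≤ k + 1, 0 < esymm (m + 1) j (Fin.snoc l x) := by
  have hev : ∀ j ∈ Set.Iic k, ∀ᶠ x in atTop, 0 < esymm m (j + 1) l + x * esymm m j l :=
    fun j hj => (tendsto_atTop_add_const_left _ _
      (tendsto_id.atTop_mul_const (h j hj))).eventually_gt_atTop 0
  obtain ⟨x, hx⟩ := ((eventually_all_finite (Set.finite_Iic k)).2 hev).exists
  refine ⟨x, fun j hj => ?_⟩
  rcases j with _ | j
  · simp [esymm_zero]
  · rw [esymm_snoc]
    exact hx j (by simp; omega)

theorem esymm_pos_of_esymm_snoc_pos {m k : ℕ} {l : Fin m → ℝ} {x : ℝ}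
    (h : ∀ j ≤ k + 1, 0 < esymm (m + 1) j (Fin.snoc l x)) : ∀ j ≤ k, 0 < esymm m j l := by
  induction k with
  | zero =>
    intro j hj
    simp [Nat.le_zero.1 hj, esymm_zero]
  | succ k ih =>
    have ih := ih fun j hj => h j (by omega)
    intro j hj
    rcases Nat.lt_or_eq_of_le hj with hj | rfl
    · exact ih j (by omega)
    have ha := ih k le_rfl
    have h1 := h (k + 1) (by omega)
    have h2 := h (k + 2) (by omega)
    rw [esymm_snoc] at h1 h2
    have := esymm_mul_esymm_le_sq m k l
    refine lt_of_not_ge fun hb => ?_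
    nlinarith

theorem stmt_8_general (m : ℕ) (k : ℕ)
    (l : Fin m → ℝ) :
    (∀ j, 1 ≤ j → j ≤ k - 1 → 0 < esymm m j l) ↔
      ∃ x : ℝ, ∀ j, 1 ≤ j → j ≤ k → 0 < esymm (m + 1) j (Fin.snoc l x) := by
  rcases k with _ | k
  · exact iff_of_true (fun j _ _ => by omega) ⟨0, fun j _ _ => by omega⟩
  simp only [Nat.add_sub_cancel, forall_le_esymm_pos_iff]
  exact ⟨exists_esymm_snoc_pos, fun ⟨_, hx⟩ => esymm_pos_of_esymm_snoc_pos hx⟩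

/-- For `n = m + 1 ≥ 2` and `2 ≤ k ≤ n`, a vector
`λ' ∈ ℝ^{n-1}` lies in the Gårding cone `Γ'_{k-1}` iff it is the projection of a
point of the Gårding cone `Γ_k ⊂ ℝⁿ` (forgetting the last coordinate). -/
theorem stmt_8 (m : ℕ) (hm : 1 ≤ m) (k : ℕ) (hk : 2 ≤ k) (hkn : k ≤ m + 1)
    (l : Fin m → ℝ) :
    (∀ j, 1 ≤ j → j ≤ k - 1 → 0 < esymm m j l) ↔
      ∃ x : ℝ, ∀ j, 1 ≤ j → j ≤ k → 0 < esymm (m + 1) j (Fin.snoc l x) :=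
  stmt_8_general m k l
end

section
/- Let n ≥ 1 and 1 ≤ k ≤ n, and let κ = (κ₁,…,κₙ) ∈ ℝⁿ with κ_i > 0 for all i and κ₁ ≥ κ_i for all i. Then κ₁·σ_{k−1}(κ₂,…,κₙ) ≥ (k/n)·σ_k(κ₁,…,κₙ). -/
/-!
Write `E = σ_{k-1}(κ₂, …, κₙ)` and `F = σ_k(κ₂, …, κₙ)`, so that `σ_k(κ) = κ₁ E + F`.
Counting pairs (`k`-subset `t`, marked element `j ∈ t`) in two ways gives
`k F = ∑_{|u| = k-1} (∑_{j ∉ u} κ_j) ∏_{i ∈ u} κ_i`, and bounding each `κ_j` by `κ₁`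
yields `k F ≤ (n - k) κ₁ E`. Hence `k σ_k(κ) ≤ k κ₁ E + (n - k) κ₁ E = n κ₁ E`.
-/

/-- The `k`-th elementary symmetric polynomial of `f` over the index set `s`. -/
noncomputable def esymmOn (n : ℕ) (s : Finset (Fin n)) (k : ℕ) (f : Fin n → ℝ) : ℝ :=
  ∑ t ∈ Finset.powersetCard k s, ∏ i ∈ t, f i

namespace Finset

variable {α R : Type*} [DecidableEq α]

theorem sum_powersetCard_succ_sum_eq_sum_powersetCard_sum_sdiff {M : Type*} [AddCommMonoid M]
    (s : Finset α) (k : ℕ) (g : Finset α → α → M) :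
    ∑ t ∈ s.powersetCard (k + 1), ∑ j ∈ t, g t j
      = ∑ u ∈ s.powersetCard k, ∑ j ∈ s \ u, g (insert j u) j := by
  rw [sum_sigma', sum_sigma']
  refine sum_nbij' (fun p => ⟨p.1.erase p.2, p.2⟩) (fun p => ⟨insert p.2 p.1, p.2⟩)
    ?_ ?_ ?_ ?_ ?_
  · rintro ⟨t, j⟩ hp
    simp only [mem_sigma, mem_powersetCard] at hp ⊢
    obtain ⟨⟨hts, htc⟩, hjt⟩ := hp
    refine ⟨⟨(erase_subset _ _).trans hts, by rw [card_erase_of_mem hjt, htc]; rfl⟩, ?_⟩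
    simp [mem_sdiff, hts hjt]
  · rintro ⟨u, j⟩ hp
    simp only [mem_sigma, mem_powersetCard, mem_sdiff] at hp ⊢
    obtain ⟨⟨hus, huc⟩, hjs, hju⟩ := hp
    exact ⟨⟨insert_subset hjs hus, by rw [card_insert_of_notMem hju, huc]⟩, mem_insert_self _ _⟩
  · rintro ⟨t, j⟩ hp
    simp only [mem_sigma, mem_powersetCard] at hp
    simp [insert_erase hp.2]
  · rintro ⟨u, j⟩ hp
    simp only [mem_sigma, mem_powersetCard, mem_sdiff] at hp
    simp [erase_insert hp.2.2]
  · rintro ⟨t, j⟩ hp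
    simp only [mem_sigma, mem_powersetCard] at hp
    simp [insert_erase hp.2]

section CommSemiring

variable [CommSemiring R]

theorem sum_powersetCard_succ_insert_prod {a : α} {s : Finset α} (ha : a ∉ s) (k : ℕ)
    (f : α → R) :
    ∑ t ∈ (insert a s).powersetCard (k + 1), ∏ i ∈ t, f i
      = f a * ∑ t ∈ s.powersetCard k, ∏ i ∈ t, f i + ∑ t ∈ s.powersetCard (k + 1), ∏ i ∈ t, f i := by
  have notMem_of_mem_powersetCard {t : Finset α} {j : ℕ} (ht : t ∈ s.powersetCard j) : a ∉ t :=
    fun hat => ha ((mem_powersetCard.mp ht).1 hat)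
  rw [powersetCard_succ_insert ha, sum_union, sum_image, add_comm, mul_sum]
  · exact congrArg₂ _ (sum_congr rfl fun t ht => prod_insert (notMem_of_mem_powersetCard ht)) rfl
  · intro t ht u hu htu
    rw [← erase_insert (notMem_of_mem_powersetCard ht), htu,
      erase_insert (notMem_of_mem_powersetCard hu)]
  · refine disjoint_left.mpr fun t ht ht' => notMem_of_mem_powersetCard ht ?_
    obtain ⟨u, -, rfl⟩ := mem_image.mp ht'
    exact mem_insert_self a u

theorem succ_mul_sum_powersetCard_succ_prod (s : Finset α) (k : ℕ) (f : α → R) :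
    (k + 1) * ∑ t ∈ s.powersetCard (k + 1), ∏ i ∈ t, f i
      = ∑ u ∈ s.powersetCard k, (∑ j ∈ s \ u, f j) * ∏ i ∈ u, f i := by
  calc (k + 1) * ∑ t ∈ s.powersetCard (k + 1), ∏ i ∈ t, f i
      = ∑ t ∈ s.powersetCard (k + 1), ∑ j ∈ t, f j * ∏ i ∈ t.erase j, f i := by
        rw [mul_sum]
        refine sum_congr rfl fun t ht => ?_
        rw [sum_congr rfl fun j hj => mul_prod_erase t f hj, sum_const,
          (mem_powersetCard.mp ht).2, nsmul_eq_mul, Nat.cast_add_one]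
    _ = ∑ u ∈ s.powersetCard k, ∑ j ∈ s \ u, f j * ∏ i ∈ (insert j u).erase j, f i :=
        sum_powersetCard_succ_sum_eq_sum_powersetCard_sum_sdiff s k _
    _ = ∑ u ∈ s.powersetCard k, (∑ j ∈ s \ u, f j) * ∏ i ∈ u, f i := by
        refine sum_congr rfl fun u _ => ?_
        rw [sum_mul]
        exact sum_congr rfl fun j hj => by rw [erase_insert (mem_sdiff.mp hj).2]

end CommSemiring

section OrderedSemiring

variable [CommSemiring R] [PartialOrder R] [IsOrderedRing R]

theorem succ_mul_sum_powersetCard_succ_prod_le {s : Finset α} {f : α → R} {M : R}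
    (hf : ∀ i ∈ s, 0 ≤ f i) (hM : ∀ i ∈ s, f i ≤ M) (k : ℕ) :
    (k + 1) * ∑ t ∈ s.powersetCard (k + 1), ∏ i ∈ t, f i
      ≤ (#s - k : ℕ) * M * ∑ t ∈ s.powersetCard k, ∏ i ∈ t, f i := by
  rw [succ_mul_sum_powersetCard_succ_prod, mul_sum]
  refine sum_le_sum fun u hu => ?_
  obtain ⟨hus, hcard⟩ := mem_powersetCard.mp hu
  have hsum : ∑ j ∈ s \ u, f j ≤ (#s - k : ℕ) * M := by
    rw [← hcard, ← card_sdiff_of_subset hus, ← nsmul_eq_mul]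
    exact sum_le_card_nsmul _ _ _ fun j hj => hM j (mem_sdiff.mp hj).1
  exact mul_le_mul_of_nonneg_right hsum (prod_nonneg fun i hi => hf i (hus hi))

theorem succ_mul_sum_powersetCard_succ_insert_prod_le {a : α} {s : Finset α} (ha : a ∉ s)
    {f : α → R} (hf : ∀ i ∈ s, 0 ≤ f i) (hmax : ∀ i ∈ s, f i ≤ f a) {k : ℕ} (hk : k ≤ #s) :
    (k + 1) * ∑ t ∈ (insert a s).powersetCard (k + 1), ∏ i ∈ t, f i
      ≤ (#s + 1) * f a * ∑ t ∈ s.powersetCard k, ∏ i ∈ t, f i := by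
  set E := ∑ t ∈ s.powersetCard k, ∏ i ∈ t, f i
  have hcard : (#s + 1 : R) = (#s - k : ℕ) + (k + 1) := by
    rw [← Nat.cast_add_one, ← Nat.cast_add_one, ← Nat.cast_add]
    congr 1
    omega
  calc (k + 1) * ∑ t ∈ (insert a s).powersetCard (k + 1), ∏ i ∈ t, f i
      = (k + 1) * (f a * E) + (k + 1) * ∑ t ∈ s.powersetCard (k + 1), ∏ i ∈ t, f i := by
        rw [sum_powersetCard_succ_insert_prod ha, mul_add]
    _ ≤ (k + 1) * (f a * E) + (#s - k : ℕ) * f a * E :=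
        add_le_add le_rfl (succ_mul_sum_powersetCard_succ_prod_le hf hmax k)
    _ = (#s + 1) * f a * E := by rw [hcard]; ring

end OrderedSemiring

end Finset

open Finset

theorem stmt_10_general (n : ℕ) (k : ℕ) (hk1 : 1 ≤ k) (hkn : k ≤ n)
    (κ : Fin n → ℝ) (hpos : ∀ i, 0 < κ i)
    (i₀ : Fin n)
    (hmax : ∀ i, κ i ≤ κ i₀) :
    (k : ℝ) / n * esymmOn n Finset.univ k κ
      ≤ κ i₀ * esymmOn n (Finset.univ.erase i₀) (k - 1) κ := by
  obtain ⟨m, rfl⟩ : ∃ m, k = m + 1 := ⟨k - 1, by omega⟩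
  have hcard : #(univ.erase i₀) = n - 1 := by simp
  have key := succ_mul_sum_powersetCard_succ_insert_prod_le (notMem_erase i₀ univ)
    (fun i _ => (hpos i).le) (fun i _ => hmax i) (k := m) (by omega)
  rw [insert_erase (mem_univ i₀), hcard, Nat.cast_sub (by omega), Nat.cast_one] at key
  have hn_pos : (0 : ℝ) < n := by exact_mod_cast (show 0 < n by omega)
  rw [esymmOn, esymmOn, Nat.add_sub_cancel, div_mul_eq_mul_div, div_le_iff₀ hn_pos]
  push_cast
  linarith

/-- If `κ₁ ≥ κ_i > 0` for all `i`, then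
`κ₁ σ_{k-1}(κ₂, …, κ_n) ≥ (k/n) σ_k(κ₁, …, κ_n)`. -/
theorem stmt_10 (n : ℕ) (hn : 1 ≤ n) (k : ℕ) (hk1 : 1 ≤ k) (hkn : k ≤ n)
    (κ : Fin n → ℝ) (hpos : ∀ i, 0 < κ i)
    (i₀ : Fin n) (hi₀ : (i₀ : ℕ) = 0)
    (hmax : ∀ i, κ i ≤ κ i₀) :
    (k : ℝ) / n * esymmOn n Finset.univ k κ
      ≤ κ i₀ * esymmOn n (Finset.univ.erase i₀) (k - 1) κ :=
  stmt_10_general n k hk1 hkn κ hpos i₀ hmax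
end

section
/- Let I ⊆ ℝ be an interval and η : I → ℝ differentiable with η(t) > 0 and η'(t) > 0 for all t ∈ I, and suppose the function t ↦ η(t)/η'(t) is nonincreasing on I. Let a, b ∈ I with a ≤ b, and let M be a symmetric n×n real matrix such that η(b)·I + η'(b)·M is positive definite. Then η(a)·I + η'(a)·M is positive definite. -/
open Matrix

/-!
Dividing by `η' > 0`, the matrix `η(t) I + η'(t) M` is positive definite iff
`(η(t)/η'(t)) I + M` is. As `t` decreases from `b` to `a` the ratio `η/η'` can only grow,
and adding a nonnegative multiple of the identity to a positive definite matrix keeps it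
positive definite.
-/

namespace Matrix

variable {n : Type*}

theorem posDef_smul_iff {A : Matrix n n ℝ} {c : ℝ} (hc : 0 < c) :
    (c • A).PosDef ↔ A.PosDef := by
  refine ⟨fun h => ?_, fun h => h.smul hc⟩
  simpa [smul_smul, inv_mul_cancel₀ hc.ne'] using h.smul (inv_pos.2 hc)

variable [DecidableEq n]

theorem posDef_smul_one_add_smul_iff {M : Matrix n n ℝ} {c d : ℝ} (hd : 0 < d) :
    (c • (1 : Matrix n n ℝ) + d • M).PosDef ↔ ((c / d) • (1 : Matrix n n ℝ) + M).PosDef := by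
  have : c • (1 : Matrix n n ℝ) + d • M = d • ((c / d) • 1 + M) := by
    rw [smul_add, smul_smul, mul_div_cancel₀ c hd.ne']
  rw [this, posDef_smul_iff hd]

theorem PosDef.smul_one_add_of_le {M : Matrix n n ℝ} {r s : ℝ}
    (h : (r • (1 : Matrix n n ℝ) + M).PosDef) (hrs : r ≤ s) :
    (s • (1 : Matrix n n ℝ) + M).PosDef := by
  have : s • (1 : Matrix n n ℝ) + M = (r • 1 + M) + (s - r) • 1 := by
    rw [sub_smul]; abel
  rw [this]
  exact h.add_posSemidef (PosSemidef.one.smul (sub_nonneg.2 hrs))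

end Matrix

theorem stmt_11_general (n : ℕ) (I : Set ℝ)
    (η η' : ℝ → ℝ)
    (hη'pos : ∀ t ∈ I, 0 < η' t)
    (hmono : AntitoneOn (fun t => η t / η' t) I)
    (a b : ℝ) (ha : a ∈ I) (hb : b ∈ I) (hab : a ≤ b)
    (M : Matrix (Fin n) (Fin n) ℝ)
    (hpos : (η b • (1 : Matrix (Fin n) (Fin n) ℝ) + η' b • M).PosDef) :
    (η a • (1 : Matrix (Fin n) (Fin n) ℝ) + η' a • M).PosDef := by
  rw [posDef_smul_one_add_smul_iff (hη'pos b hb)] at hpos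
  rw [posDef_smul_one_add_smul_iff (hη'pos a ha)]
  exact hpos.smul_one_add_of_le (hmono ha hb hab)

/-- If `η, η' > 0` on an interval `I`, `η/η'` is nonincreasing on `I`,
`a ≤ b` in `I`, `M` is symmetric and `η(b) I + η'(b) M` is positive definite, then
`η(a) I + η'(a) M` is positive definite. -/
theorem stmt_11 (n : ℕ) (I : Set ℝ) (hI : I.OrdConnected)
    (η η' : ℝ → ℝ)
    (hdiff : ∀ t ∈ I, HasDerivAt η (η' t) t)
    (hηpos : ∀ t ∈ I, 0 < η t) (hη'pos : ∀ t ∈ I, 0 < η' t)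
    (hmono : AntitoneOn (fun t => η t / η' t) I)
    (a b : ℝ) (ha : a ∈ I) (hb : b ∈ I) (hab : a ≤ b)
    (M : Matrix (Fin n) (Fin n) ℝ) (hM : M.IsSymm)
    (hpos : (η b • (1 : Matrix (Fin n) (Fin n) ℝ) + η' b • M).PosDef) :
    (η a • (1 : Matrix (Fin n) (Fin n) ℝ) + η' a • M).PosDef :=
  stmt_11_general n I η η' hη'pos hmono a b ha hb hab M hpos
end

section
/- Let n ≥ 1, let u > 0 be a real number, p ∈ ℝⁿ, and let H be a symmetric positive semidefinite n×n real matrix. For t ≥ 0 define q(t) = √(u² + t²), w̃(t) = √(u² + t² + |p|²), the symmetric matrix γ̃(t) = I − p·pᵀ/(w̃(t)·(q(t) + w̃(t))), and the symmetric matrix a(t) = (q(t)/w̃(t))·γ̃(t)·H·γ̃(t). Then for every 1 ≤ k ≤ n, the function t ↦ σ_k(λ(a(t))) is nondecreasing on [0, ∞), where λ(a(t)) denotes the n-tuple of eigenvalues (with multiplicity) of a(t). -/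
open Matrix

/-!
Write `H = Rᴴ R` and `c = q / w̃`. Then `a(t) = c • (γ̃ Rᴴ) (R γ̃)` has the same characteristic
polynomial as `c • R γ̃² Rᴴ`, and `γ̃² = 1 - p pᵀ / w̃²`; so `a(t)` has the same eigenvalues as
`b(t) = c • R Rᴴ - (c / w̃²) • R p pᵀ Rᴴ`. Both `c` and `c - |p|² c / w̃² = c³` increase with `t`,
and `R Rᴴ`, `R p pᵀ Rᴴ`, `|p|² R Rᴴ - R p pᵀ Rᴴ` are positive semidefinite, so `b(t)` is positive
semidefinite and increases in the Loewner order. Finally `σ_k` of the eigenvalues of a symmetric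
matrix is the sum of its `k × k` principal minors, and the determinant is monotone in the Loewner
order on positive semidefinite matrices.
-/

open Polynomial Finset

namespace Matrix

theorem IsHermitian.esymm_eigenvalues_eq_sum_minors {n k : ℕ} (hkn : k ≤ n)
    {A : Matrix (Fin n) (Fin n) ℝ} (hA : A.IsHermitian) :
    esymm n k hA.eigenvalues =
      ∑ s ∈ univ.powersetCard k, (A.submatrix (Subtype.val : s → Fin n) Subtype.val).det := by
  have hcoeff := A.charpoly_coeff_eq_sum_minors k (by simpa using hkn)
  rw [coeff_eq_esymm_roots_of_splits hA.splits_charpoly (by simp),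
    hA.roots_charpoly_eq_eigenvalues, A.charpoly_monic.leadingCoeff, A.charpoly_natDegree_eq_dim,
    Fintype.card_fin, Nat.sub_sub_self hkn, Finset.esymm_map_val] at hcoeff
  rw [esymm]
  simpa using hcoeff

section Determinant

variable {m : Type*} [Fintype m] [DecidableEq m]

theorem IsHermitian.det_one_add {M : Matrix m m ℝ} (hM : M.IsHermitian) :
    (1 + M).det = ∏ i, (1 + hM.eigenvalues i) := by
  have h := congrArg (eval (-1)) hM.charpoly_eq
  rw [eval_charpoly, eval_prod,
    show scalar m (-1 : ℝ) - M = -(1 + M) by rw [map_neg, map_one, neg_add'], det_neg] at h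
  simp only [eval_sub, eval_X, eval_C, RCLike.ofReal_real_eq_id, id, ← neg_add', prod_neg] at h
  exact mul_left_cancel₀ (pow_ne_zero _ (by norm_num)) h

theorem PosSemidef.one_le_det_one_add {M : Matrix m m ℝ} (hM : M.PosSemidef) :
    1 ≤ (1 + M).det := by
  rw [hM.isHermitian.det_one_add]
  exact Finset.one_le_prod fun i _ => le_add_of_nonneg_right (hM.eigenvalues_nonneg i)

open scoped MatrixOrder ComplexOrder in
theorem PosSemidef.exists_eq_conjTranspose_mul_self {𝕜 : Type*} [RCLike 𝕜] {A : Matrix m m 𝕜}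
    (hA : A.PosSemidef) : ∃ B : Matrix m m 𝕜, A = Bᴴ * B :=
  CStarAlgebra.nonneg_iff_eq_star_mul_self.mp hA.nonneg

theorem PosSemidef.det_le_det_add {A D : Matrix m m ℝ} (hA : A.PosSemidef) (hD : D.PosSemidef) :
    A.det ≤ (A + D).det := by
  by_cases hA0 : A.det = 0
  · exact hA0 ▸ (hA.add hD).det_nonneg
  obtain ⟨B, rfl⟩ := hA.exists_eq_conjTranspose_mul_self
  have hB : IsUnit B.det := by
    refine isUnit_iff_ne_zero.mpr fun h => hA0 ?_
    rw [det_mul, h, mul_zero]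
  set M := B⁻¹ᴴ * D * B⁻¹
  have hBM : Bᴴ * B + D = Bᴴ * (1 + M) * B := by
    simp only [M, Matrix.mul_add, Matrix.add_mul, Matrix.mul_one, Matrix.mul_assoc,
      nonsing_inv_mul B hB]
    rw [← Matrix.mul_assoc Bᴴ, ← conjTranspose_mul, nonsing_inv_mul B hB, conjTranspose_one,
      Matrix.one_mul]
  have hdet : (Bᴴ * (1 + M) * B).det = (Bᴴ * B).det * (1 + M).det := by
    simp only [det_mul]; ring
  rw [hBM, hdet]
  exact le_mul_of_one_le_right hA.det_nonneg (hD.conjTranspose_mul_mul_same B⁻¹).one_le_det_one_add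

end Determinant

theorem PosSemidef.esymm_eigenvalues_le {n k : ℕ} (hkn : k ≤ n)
    {A B : Matrix (Fin n) (Fin n) ℝ} (hA : A.PosSemidef) (hB : B.IsHermitian)
    (hAB : (B - A).PosSemidef) :
    esymm n k hA.isHermitian.eigenvalues ≤ esymm n k hB.eigenvalues := by
  rw [hA.isHermitian.esymm_eigenvalues_eq_sum_minors hkn, hB.esymm_eigenvalues_eq_sum_minors hkn]
  refine sum_le_sum fun s _ => ?_
  have h : (A.submatrix (Subtype.val : s → Fin n) Subtype.val).det ≤
      ((A + (B - A)).submatrix Subtype.val Subtype.val).det :=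
    (hA.submatrix _).det_le_det_add (hAB.submatrix _)
  rwa [add_sub_cancel] at h

section Pencil

variable {m : Type*} {G M : Matrix m m ℝ} {P : ℝ}

theorem posSemidef_smul_sub_smul {α β : ℝ} (hG : G.PosSemidef)
    (hPGM : (P • G - M).PosSemidef) (hβ : 0 ≤ β) (hαβ : 0 ≤ α - P * β) :
    (α • G - β • M).PosSemidef := by
  have h : α • G - β • M = (α - P * β) • G + β • (P • G - M) := by module
  exact h ▸ (hG.smul hαβ).add (hPGM.smul hβ)

theorem posSemidef_smul_sub_smul_sub {α₁ α₂ β₁ β₂ : ℝ}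
    (hG : G.PosSemidef) (hM : M.PosSemidef) (hPGM : (P • G - M).PosSemidef)
    (hα : α₁ ≤ α₂) (hαβ : α₁ - P * β₁ ≤ α₂ - P * β₂) :
    ((α₂ • G - β₂ • M) - (α₁ • G - β₁ • M)).PosSemidef := by
  rcases le_total β₂ β₁ with hβ | hβ
  · have h : (α₂ • G - β₂ • M) - (α₁ • G - β₁ • M) = (α₂ - α₁) • G + (β₁ - β₂) • M := by module
    exact h ▸ (hG.smul (sub_nonneg.mpr hα)).add (hM.smul (sub_nonneg.mpr hβ))
  · have h : (α₂ • G - β₂ • M) - (α₁ • G - β₁ • M) =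
        ((α₂ - P * β₂) - (α₁ - P * β₁)) • G + (β₂ - β₁) • (P • G - M) := by module
    exact h ▸ (hG.smul (sub_nonneg.mpr hαβ)).add (hPGM.smul (sub_nonneg.mpr hβ))

end Pencil

section RankOne

variable {m : Type*} [Fintype m]

theorem one_sub_smul_vecMulVec_mul_self [DecidableEq m] {R : Type*} [CommRing R] (p : m → R)
    (r : R) :
    (1 - r • vecMulVec p p) * (1 - r • vecMulVec p p) =
      1 - (2 * r - r ^ 2 * (p ⬝ᵥ p)) • vecMulVec p p := by
  simp only [Matrix.sub_mul, Matrix.mul_sub, Matrix.one_mul, Matrix.mul_one, smul_mul_smul_comm,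
    vecMulVec_mul_vecMulVec, vecMulVec_smul]
  module

theorem posSemidef_vecMulVec_self (p : m → ℝ) : (vecMulVec p p).PosSemidef := by
  simpa using posSemidef_vecMulVec_self_star p

theorem posSemidef_dotProduct_self_smul_one_sub_vecMulVec [DecidableEq m] (p : m → ℝ) :
    ((p ⬝ᵥ p) • 1 - vecMulVec p p).PosSemidef := by
  refine posSemidef_iff_dotProduct_mulVec.mpr ⟨?_, fun x => ?_⟩
  · exact (isHermitian_one.smul (IsSelfAdjoint.all _)).sub
      (posSemidef_vecMulVec_self p).isHermitian
  · have hx : star x ⬝ᵥ (((p ⬝ᵥ p) • 1 - vecMulVec p p) *ᵥ x) =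
        (p ⬝ᵥ p) * (x ⬝ᵥ x) - (p ⬝ᵥ x) ^ 2 := by
      simp [sub_mulVec, smul_mulVec, vecMulVec_mulVec, dotProduct_comm x p, sq]
    have hcs := sum_mul_sq_le_sq_mul_sq univ p x
    rw [hx]
    simp only [dotProduct, ← sq] at hcs ⊢
    linarith

theorem posSemidef_dotProduct_self_smul_mul_conjTranspose_sub {l : Type*} [Fintype l]
    (p : m → ℝ) (R : Matrix l m ℝ) :
    ((p ⬝ᵥ p) • (R * Rᴴ) - R * vecMulVec p p * Rᴴ).PosSemidef := by
  classical
  have h := (posSemidef_dotProduct_self_smul_one_sub_vecMulVec p).mul_mul_conjTranspose_same R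
  rwa [Matrix.mul_sub, Matrix.sub_mul, Matrix.mul_smul, Matrix.smul_mul, Matrix.mul_one] at h

end RankOne

theorem charpoly_smul_mul_mul_mul_comm {m : Type*} [Fintype m] [DecidableEq m] {R : Type*}
    [CommRing R] (c : R) (X S T : Matrix m m R) :
    (c • (X * (S * T) * X)).charpoly = (c • (T * (X * X) * S)).charpoly := by
  rw [show X * (S * T) * X = (X * S) * (T * X) by simp only [Matrix.mul_assoc],
    ← Matrix.mul_smul, charpoly_mul_comm, Matrix.smul_mul]
  simp only [Matrix.mul_assoc]

theorem charpoly_smul_conj_one_sub_smul_vecMulVec {m : Type*} [Fintype m] [DecidableEq m] {q W : ℝ}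
    (hq : 0 < q) (hW : 0 < W) {p : m → ℝ} (hWq : W ^ 2 = q ^ 2 + p ⬝ᵥ p)
    {γ : Matrix m m ℝ} (hγ : γ = 1 - (W * (q + W))⁻¹ • vecMulVec p p) (R : Matrix m m ℝ) :
    ((q / W) • (γ * (Rᴴ * R) * γ)).charpoly =
      ((q / W) • (R * Rᴴ) - (q / W / W ^ 2) • (R * vecMulVec p p * Rᴴ)).charpoly := by
  have hcoeff : 2 * (W * (q + W))⁻¹ - (W * (q + W))⁻¹ ^ 2 * (p ⬝ᵥ p) = (W ^ 2)⁻¹ := by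
    rw [show p ⬝ᵥ p = W ^ 2 - q ^ 2 by linarith]
    field_simp
    ring
  rw [charpoly_smul_mul_mul_mul_comm, hγ, one_sub_smul_vecMulVec_mul_self, hcoeff]
  congr 1
  simp only [Matrix.mul_sub, Matrix.sub_mul, Matrix.mul_one, Matrix.mul_smul, Matrix.smul_mul,
    smul_sub, smul_smul, div_eq_mul_inv]

end Matrix

theorem monotoneOn_sqrt_div_sqrt {u P : ℝ} (hu : 0 < u) (hP : 0 ≤ P) :
    MonotoneOn (fun t => √(u ^ 2 + t ^ 2) / √(u ^ 2 + t ^ 2 + P)) (Set.Ici 0) := by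
  intro t₁ h₁ t₂ h₂ h12
  have ht : t₁ ^ 2 ≤ t₂ ^ 2 := pow_le_pow_left₀ h₁ h12 2
  have hpos (t : ℝ) : 0 < u ^ 2 + t ^ 2 + P := add_pos_of_pos_of_nonneg (by positivity) hP
  dsimp only
  rw [← Real.sqrt_div' _ (hpos t₁).le, ← Real.sqrt_div' _ (hpos t₂).le]
  refine Real.sqrt_le_sqrt ((div_le_div_iff₀ (by positivity) (by positivity)).mpr ?_)
  nlinarith

theorem div_sub_mul_div_div_sq_eq_pow_three {q W P : ℝ} (hW : W ≠ 0) (hWq : W ^ 2 = q ^ 2 + P) :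
    q / W - P * (q / W / W ^ 2) = (q / W) ^ 3 := by
  rw [show P = W ^ 2 - q ^ 2 by linarith]
  field_simp
  ring

theorem stmt_13_general (n : ℕ) (u : ℝ) (hu : 0 < u) (p : Fin n → ℝ)
    (H : Matrix (Fin n) (Fin n) ℝ) (hH : H.PosSemidef)
    (q W : ℝ → ℝ)
    (hq : ∀ t, q t = Real.sqrt (u ^ 2 + t ^ 2))
    (hW : ∀ t, W t = Real.sqrt (u ^ 2 + t ^ 2 + ∑ i, p i ^ 2))
    (γ : ℝ → Matrix (Fin n) (Fin n) ℝ)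
    (hγ : ∀ t, γ t = 1 - (W t * (q t + W t))⁻¹ • Matrix.vecMulVec p p)
    (a : ℝ → Matrix (Fin n) (Fin n) ℝ)
    (ha : ∀ t, a t = (q t / W t) • (γ t * H * γ t))
    (hherm : ∀ t, (a t).IsHermitian)
    (k : ℕ) (hkn : k ≤ n) :
    MonotoneOn (fun t => esymm n k (hherm t).eigenvalues) (Set.Ici 0) := by
  obtain ⟨R, rfl⟩ := hH.exists_eq_conjTranspose_mul_self
  have hP : ∑ i, p i ^ 2 = p ⬝ᵥ p := by simp only [dotProduct, sq]
  have hq0 t : 0 < q t := hq t ▸ Real.sqrt_pos.mpr (by positivity)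
  have hW0 t : 0 < W t := hW t ▸ Real.sqrt_pos.mpr (by positivity)
  have hWq t : W t ^ 2 = q t ^ 2 + p ⬝ᵥ p := by
    rw [hq, hW, Real.sq_sqrt (by positivity), Real.sq_sqrt (by positivity), hP]
  have hc0 t : 0 < q t / W t := div_pos (hq0 t) (hW0 t)
  have hc : MonotoneOn (fun t => q t / W t) (Set.Ici 0) := by
    simpa only [hq, hW, hP] using monotoneOn_sqrt_div_sqrt hu (hP ▸ by positivity)
  have hc_cube t := div_sub_mul_div_div_sq_eq_pow_three (hW0 t).ne' (hWq t)
  have hG := posSemidef_self_mul_conjTranspose R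
  have hPGM := posSemidef_dotProduct_self_smul_mul_conjTranspose_sub p R
  have hb t : ((q t / W t) • (R * Rᴴ) -
      (q t / W t / W t ^ 2) • (R * vecMulVec p p * Rᴴ)).PosSemidef :=
    posSemidef_smul_sub_smul hG hPGM (div_nonneg (hc0 t).le (by positivity))
      (hc_cube t ▸ pow_nonneg (hc0 t).le 3)
  have hab t : (hherm t).eigenvalues = (hb t).isHermitian.eigenvalues :=
    ((hherm t).eigenvalues_eq_eigenvalues_iff (hb t).isHermitian).mpr <| by
      rw [ha]; exact charpoly_smul_conj_one_sub_smul_vecMulVec (hq0 t) (hW0 t) (hWq t) (hγ t) R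
  intro t₁ h₁ t₂ h₂ h12
  simp only [hab]
  refine (hb t₁).esymm_eigenvalues_le hkn (hb t₂).isHermitian <|
    posSemidef_smul_sub_smul_sub hG ((posSemidef_vecMulVec_self p).mul_mul_conjTranspose_same R)
      hPGM (hc h₁ h₂ h12) ?_
  rw [hc_cube, hc_cube]
  exact pow_le_pow_left₀ (hc0 t₁).le (hc h₁ h₂ h12) 3

/-- With `q(t) = √(u²+t²)`, `w̃(t) = √(u²+t²+|p|²)`,
`γ̃(t) = I − p pᵀ/(w̃(t)(q(t)+w̃(t)))` and `a(t) = (q(t)/w̃(t)) γ̃(t) H γ̃(t)`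
for a symmetric positive semidefinite `H`, the function
`t ↦ σ_k(λ(a(t)))` is nondecreasing on `[0, ∞)` for each `1 ≤ k ≤ n`. -/
theorem stmt_13 (n : ℕ) (hn : 1 ≤ n) (u : ℝ) (hu : 0 < u) (p : Fin n → ℝ)
    (H : Matrix (Fin n) (Fin n) ℝ) (hH : H.PosSemidef)
    (q W : ℝ → ℝ)
    (hq : ∀ t, q t = Real.sqrt (u ^ 2 + t ^ 2))
    (hW : ∀ t, W t = Real.sqrt (u ^ 2 + t ^ 2 + ∑ i, p i ^ 2))
    (γ : ℝ → Matrix (Fin n) (Fin n) ℝ)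
    (hγ : ∀ t, γ t = 1 - (W t * (q t + W t))⁻¹ • Matrix.vecMulVec p p)
    (a : ℝ → Matrix (Fin n) (Fin n) ℝ)
    (ha : ∀ t, a t = (q t / W t) • (γ t * H * γ t))
    (hherm : ∀ t, (a t).IsHermitian)
    (k : ℕ) (hk1 : 1 ≤ k) (hkn : k ≤ n) :
    MonotoneOn (fun t => esymm n k (hherm t).eigenvalues) (Set.Ici 0) :=
  stmt_13_general n u hu p H hH q W hq hW γ hγ a ha hherm k hkn
end
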